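/- For every integer m ≥ 1 there exists a constant C_m > 0 such that for every variance v > 0 and every h ∈ ℝ, the m-th finite difference of the centered Gaussian density g_v with variance v satisfies ∫_ℝ |(Δ_h^m g_v)(z)| dz ≤ C_m (|h| / √v)^m. -/

import Mathlib

open MeasureTheory Real

/-- The `m`-th finite difference of `f : ℝ → ℝ` at lag `h`:
`(Δ_h^m f)(x) = Σ_{j=0}^m (-1)^{m-j} C(m,j) f(x + j h)`. -/
noncomputable def finDiff (h : ℝ) (m : ℕ) (f : ℝ → ℝ) (x : ℝ) : ℝ :=
  ∑ j ∈ Finset.range (m + 1), (-1 : ℝ) ^ (m - j) * (m.choose j : ℝ) * f (x + (j : ℝ) * h)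

/-- The centered Gaussian density with variance `v`:
`g_v(z) = (2πv)^{-1/2} exp(-z²/(2v))`. -/
noncomputable def gaussDensity (v z : ℝ) : ℝ :=
  (Real.sqrt (2 * π * v))⁻¹ * Real.exp (-(z ^ 2) / (2 * v))

namespace FDAux

/-! ### The class of functions `polynomial × Gaussian` -/

/-- Standard Gaussian weight. -/
noncomputable def E (z : ℝ) : ℝ := Real.exp (-(z ^ 2) / 2)

/-- `f_P(z) = P(z) e^{-z²/2}`. -/
noncomputable def fP (P : Polynomial ℝ) (z : ℝ) : ℝ := P.eval z * E z

/-- The operator on polynomials corresponding to differentiation of `fP`. -/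
noncomputable def DD (P : Polynomial ℝ) : Polynomial ℝ := P.derivative - Polynomial.X * P

lemma hasDerivAt_E (z : ℝ) : HasDerivAt E (-z * E z) z := by
  have h1 : HasDerivAt (fun z : ℝ => -(z ^ 2) / 2) (-z) z := by
    have h : HasDerivAt (fun z : ℝ => -(z ^ 2) / 2) (-(((2:ℕ):ℝ) * z ^ (2 - 1)) / 2) z :=
      ((hasDerivAt_pow 2 z).neg).div_const 2
    convert h using 1
    push_cast
    ring
  have h2 := h1.exp
  have : Real.exp (-(z ^ 2) / 2) * -z = -z * E z := by unfold E; ring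
  rw [← this]
  exact h2

lemma hasDerivAt_fP (P : Polynomial ℝ) (z : ℝ) : HasDerivAt (fP P) (fP (DD P) z) z := by
  have h : HasDerivAt (fP P)
      (P.derivative.eval z * E z + P.eval z * (-z * E z)) z :=
    (P.hasDerivAt z).mul (hasDerivAt_E z)
  convert h using 1
  simp [fP, DD]
  ring

lemma continuous_fP (P : Polynomial ℝ) : Continuous (fP P) := by
  unfold fP E
  exact P.continuous.mul ((continuous_neg.comp (continuous_pow 2)).div_const 2).rexp

lemma integrable_pow_mul_E (n : ℕ) : Integrable (fun x : ℝ => x ^ n * E x) := by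
  have h := integrable_rpow_mul_exp_neg_mul_sq (b := (1:ℝ)/2) (by norm_num)
    (s := (n : ℝ)) (lt_of_lt_of_le (by norm_num) (Nat.cast_nonneg n))
  have : (fun x : ℝ => x ^ (n : ℝ) * Real.exp (-(1/2) * x ^ 2)) =
      fun x : ℝ => x ^ n * E x := by
    funext x
    rw [Real.rpow_natCast]
    unfold E
    ring_nf
  rwa [this] at h

lemma integrable_fP (P : Polynomial ℝ) : Integrable (fP P) := by
  induction P using Polynomial.induction_on' with
  | add p q hp hq =>
    have : fP (p + q) = fun z => fP p z + fP q z := by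
      funext z; simp [fP]; ring
    rw [this]; exact hp.add hq
  | monomial n a =>
    have : fP (Polynomial.monomial n a) = fun z => a * (z ^ n * E z) := by
      funext z; simp [fP, Polynomial.eval_monomial]; ring
    rw [this]
    exact (integrable_pow_mul_E n).const_mul a

/-! ### Basic properties of `finDiff` -/

lemma finDiff_zero (h : ℝ) (f : ℝ → ℝ) (x : ℝ) : finDiff h 0 f x = f x := by
  simp [finDiff]

lemma finDiff_succ (h : ℝ) (m : ℕ) (f : ℝ → ℝ) (x : ℝ) :
    finDiff h (m + 1) f x = finDiff h m f (x + h) - finDiff h m f x := by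
  unfold finDiff
  rw [Finset.sum_range_succ' (fun j => (-1 : ℝ) ^ (m + 1 - j) * ((m+1).choose j : ℝ)
    * f (x + (j : ℝ) * h))]
  have hsplit : ∀ j ∈ Finset.range (m + 1),
      (-1 : ℝ) ^ (m + 1 - (j+1)) * (((m+1).choose (j+1) : ℕ) : ℝ) * f (x + ((j+1 : ℕ) : ℝ) * h)
      = (-1 : ℝ) ^ (m - j) * (m.choose j : ℝ) * f ((x + h) + (j : ℝ) * h)
        + (-1 : ℝ) ^ (m - j) * (m.choose (j+1) : ℝ) * f (x + ((j+1 : ℕ) : ℝ) * h) := by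
    intro j hj
    have h1 : m + 1 - (j + 1) = m - j := by omega
    have h2 : (x + h) + (j : ℝ) * h = x + ((j+1 : ℕ) : ℝ) * h := by push_cast; ring
    rw [h1, h2, Nat.choose_succ_succ]
    push_cast
    ring
  rw [Finset.sum_congr rfl hsplit, Finset.sum_add_distrib]
  have hB : ∑ j ∈ Finset.range (m + 1),
      (-1 : ℝ) ^ (m - j) * (m.choose (j+1) : ℝ) * f (x + ((j+1 : ℕ) : ℝ) * h)
      + (-1 : ℝ) ^ (m + 1 - 0) * ((m+1).choose 0 : ℝ) * f (x + ((0:ℕ) : ℝ) * h)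
      = - ∑ j ∈ Finset.range (m + 1),
          (-1 : ℝ) ^ (m - j) * (m.choose j : ℝ) * f (x + (j : ℝ) * h) := by
    rw [← Finset.sum_neg_distrib,
      Finset.sum_range_succ' (fun j => -((-1 : ℝ) ^ (m - j) * (m.choose j : ℝ)
        * f (x + (j : ℝ) * h)))]
    rw [Finset.sum_range_succ
      (fun j => (-1 : ℝ) ^ (m - j) * (m.choose (j+1) : ℝ) * f (x + ((j+1 : ℕ) : ℝ) * h))]
    simp only [Nat.choose_succ_self, Nat.cast_zero, mul_zero, zero_mul, add_zero]
    congr 1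
    · apply Finset.sum_congr rfl
      intro j hj
      rw [Finset.mem_range] at hj
      have h1 : m - j = (m - (j + 1)) + 1 := by omega
      rw [h1, pow_succ]
      push_cast
      ring
    · simp [Nat.sub_self]
      ring
  rw [add_assoc, hB]
  ring

lemma finDiff_hasDerivAt {f f' : ℝ → ℝ} (hf : ∀ x, HasDerivAt f (f' x) x)
    (h : ℝ) (m : ℕ) (x : ℝ) :
    HasDerivAt (finDiff h m f) (finDiff h m f' x) x := by
  unfold finDiff
  apply HasDerivAt.fun_sum
  intro j _
  have h1 : HasDerivAt (fun y : ℝ => f (y + (j : ℝ) * h)) (f' (x + (j : ℝ) * h)) x := by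
    have : HasDerivAt (fun y : ℝ => f (y + (j : ℝ) * h)) (f' (x + (j : ℝ) * h) * 1) x :=
      (hf (x + (j : ℝ) * h)).comp x ((hasDerivAt_id x).add_const ((j : ℝ) * h))
    simpa using this
  simpa [mul_comm] using h1.const_mul ((-1 : ℝ) ^ (m - j) * (m.choose j : ℝ))

lemma finDiff_integrable {f : ℝ → ℝ} (hf : Integrable f) (h : ℝ) (m : ℕ) :
    Integrable (finDiff h m f) := by
  unfold finDiff
  apply integrable_finset_sum
  intro j _
  exact (hf.comp_add_right ((j : ℝ) * h)).const_mul _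

lemma finDiff_continuous {f : ℝ → ℝ} (hf : Continuous f) (h : ℝ) (m : ℕ) :
    Continuous (finDiff h m f) := by
  unfold finDiff
  apply continuous_finset_sum
  intro j _
  exact continuous_const.mul (hf.comp (continuous_id.add continuous_const))

/-! ### The L¹ shift estimate -/

lemma volume_uIoc' (t : ℝ) : volume (Set.uIoc 0 t) = ENNReal.ofReal |t| := by
  rcases le_total (0:ℝ) t with h' | h'
  · rw [Set.uIoc_of_le h', Real.volume_Ioc, sub_zero, abs_of_nonneg h']
  · rw [Set.uIoc_of_ge h', Real.volume_Ioc, zero_sub, abs_of_nonpos h']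

lemma integral_abs_shift_sub_le {F F' : ℝ → ℝ} (hd : ∀ x, HasDerivAt F (F' x) x)
    (hc : Continuous F') (hi : Integrable F') (t : ℝ) :
    (∫ x : ℝ, |F (x + t) - F x|) ≤ |t| * ∫ x : ℝ, |F' x| := by
  set ν : Measure ℝ := volume.restrict (Set.uIoc 0 t) with hν
  -- pointwise bound
  have hpt : ∀ x : ℝ, |F (x + t) - F x| ≤ ∫ u, |F' (x + u)| ∂ν := by
    intro x
    have hftc : F (x + t) - F x = ∫ u in x..(x + t), F' u :=
      (intervalIntegral.integral_eq_sub_of_hasDerivAt (fun u _ => hd u)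
        (hc.intervalIntegrable _ _)).symm
    have hcv : (∫ u in (0:ℝ)..t, F' (x + u)) = ∫ u in x..(x + t), F' u := by
      rw [intervalIntegral.integral_comp_add_left]
      simp [add_comm]
    have hbd : |∫ u in (0:ℝ)..t, F' (x + u)| ≤ ∫ u in Set.uIoc 0 t, |F' (x + u)| := by
      simpa [Real.norm_eq_abs] using
        (intervalIntegral.norm_integral_le_integral_norm_uIoc
          (f := fun u => F' (x + u)) (a := (0:ℝ)) (b := t) (μ := volume))
    calc |F (x + t) - F x| = |∫ u in (0:ℝ)..t, F' (x + u)| := by rw [hftc, hcv]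
      _ ≤ ∫ u in Set.uIoc 0 t, |F' (x + u)| := hbd
  -- product integrability of (u, x) ↦ |F' (x + u)| on ν ×ₘ volume
  have hmeas : AEStronglyMeasurable (fun p : ℝ × ℝ => |F' (p.2 + p.1)|)
      (ν.prod volume) := by
    apply Continuous.aestronglyMeasurable
    exact (hc.comp (continuous_snd.add continuous_fst)).abs
  have hprod : Integrable (fun p : ℝ × ℝ => |F' (p.2 + p.1)|) (ν.prod volume) := by
    rw [integrable_prod_iff hmeas]
    constructor
    · refine Filter.Eventually.of_forall (fun u => ?_)
      exact ((hi.comp_add_right u).abs : Integrable fun x => |F' (x + u)|)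
    · have hconst : (fun u : ℝ => ∫ x : ℝ, ‖|F' (x + u)|‖) = fun _ => ∫ x : ℝ, |F' x| := by
        funext u
        simp only [Real.norm_eq_abs, abs_abs]
        exact integral_add_right_eq_self (fun x => |F' x|) u
      rw [hconst]
      rw [hν]
      exact integrableOn_const (by rw [volume_uIoc' t]; exact ENNReal.ofReal_lt_top.ne)
  -- main computation
  have hswap : (∫ u, (∫ x : ℝ, |F' (x + u)|) ∂ν) = ∫ x : ℝ, ∫ u, |F' (x + u)| ∂ν := by
    exact (integral_integral_swap (f := fun u x => |F' (x + u)|) hprod)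
  have hRHSint : Integrable (fun x : ℝ => ∫ u, |F' (x + u)| ∂ν) volume := by
    have := hprod.integral_norm_prod_right
    simpa [Real.norm_eq_abs, abs_abs] using this
  calc (∫ x : ℝ, |F (x + t) - F x|)
      ≤ ∫ x : ℝ, ∫ u, |F' (x + u)| ∂ν := by
        apply integral_mono_of_nonneg (Filter.Eventually.of_forall fun x => abs_nonneg _)
          hRHSint (Filter.Eventually.of_forall hpt)
    _ = ∫ u, (∫ x : ℝ, |F' (x + u)|) ∂ν := hswap.symm
    _ = ∫ _u, (∫ x : ℝ, |F' x|) ∂ν := by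
        congr 1
        funext u
        exact integral_add_right_eq_self (fun x => |F' x|) u
    _ = (ν Set.univ).toReal * ∫ x : ℝ, |F' x| := by
        rw [integral_const]
        simp
        exact Or.inl rfl
    _ = |t| * ∫ x : ℝ, |F' x| := by
        rw [hν]
        rw [Measure.restrict_apply_univ, volume_uIoc' t]
        rw [ENNReal.toReal_ofReal (abs_nonneg t)]

/-! ### The main estimate for the standard Gaussian class -/

lemma key (t : ℝ) : ∀ m : ℕ, ∀ P : Polynomial ℝ,
    (∫ x : ℝ, |finDiff t m (fP P) x|) ≤ |t| ^ m * ∫ x : ℝ, |fP (DD^[m] P) x| := by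
  intro m
  induction m with
  | zero =>
    intro P
    simp [finDiff_zero]
  | succ m ih =>
    intro P
    have hd : ∀ x, HasDerivAt (finDiff t m (fP P)) (finDiff t m (fP (DD P)) x) x :=
      fun x => finDiff_hasDerivAt (fun y => hasDerivAt_fP P y) t m x
    have hc : Continuous (finDiff t m (fP (DD P))) :=
      finDiff_continuous (continuous_fP (DD P)) t m
    have hi : Integrable (finDiff t m (fP (DD P))) :=
      finDiff_integrable (integrable_fP (DD P)) t m
    calc (∫ x : ℝ, |finDiff t (m + 1) (fP P) x|)
        = ∫ x : ℝ, |finDiff t m (fP P) (x + t) - finDiff t m (fP P) x| := by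
          simp_rw [finDiff_succ]
      _ ≤ |t| * ∫ x : ℝ, |finDiff t m (fP (DD P)) x| :=
          integral_abs_shift_sub_le hd hc hi t
      _ ≤ |t| * (|t| ^ m * ∫ x : ℝ, |fP (DD^[m] (DD P)) x|) :=
          mul_le_mul_of_nonneg_left (ih (DD P)) (abs_nonneg t)
      _ = |t| ^ (m + 1) * ∫ x : ℝ, |fP (DD^[m+1] P) x| := by
          rw [Function.iterate_succ_apply, pow_succ]
          ring

/-! ### Scaling -/

lemma gauss_scaling {v : ℝ} (hv : 0 < v) (w : ℝ) :
    gaussDensity v w = (Real.sqrt v)⁻¹ * gaussDensity 1 (w / Real.sqrt v) := by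
  have hs : (0:ℝ) < Real.sqrt v := Real.sqrt_pos.2 hv
  have hsq : Real.sqrt v ^ 2 = v := Real.sq_sqrt hv.le
  unfold gaussDensity
  have h1 : Real.sqrt (2 * π * v) = Real.sqrt (2 * π) * Real.sqrt v := by
    rw [Real.sqrt_mul (by positivity) v]
  have h2 : (w / Real.sqrt v) ^ 2 = w ^ 2 / v := by
    rw [div_pow, hsq]
  rw [h1, h2]
  rw [mul_one, mul_one]
  rw [mul_inv]
  rw [show -(w ^ 2 / v) / 2 = -(w ^ 2) / (2 * v) by rw [← neg_div, div_div, mul_comm]]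
  ring

lemma gauss_eq_fP : gaussDensity 1 = fP (Polynomial.C ((Real.sqrt (2 * π))⁻¹)) := by
  funext z
  simp [gaussDensity, fP, E]

end FDAux

open FDAux in
/-- For every integer `m ≥ 1` there is `C_m > 0` such that for every `v > 0` and `h ∈ ℝ`,
`∫_ℝ |(Δ_h^m g_v)(z)| dz ≤ C_m (|h|/√v)^m`. -/
theorem finite_difference_gaussian_L1_bound (m : ℕ) (hm : 1 ≤ m) :
    ∃ C : ℝ, 0 < C ∧
      ∀ v : ℝ, 0 < v → ∀ h : ℝ,
        (∫ z : ℝ, |finDiff h m (gaussDensity v) z|) ≤ C * (|h| / Real.sqrt v) ^ m := by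
  set P₀ : Polynomial ℝ := Polynomial.C ((Real.sqrt (2 * π))⁻¹) with hP₀
  set A : ℝ := ∫ x : ℝ, |fP (DD^[m] P₀) x| with hA
  have hA0 : 0 ≤ A := integral_nonneg fun x => abs_nonneg _
  refine ⟨A + 1, by linarith, ?_⟩
  intro v hv h
  set s : ℝ := Real.sqrt v with hs
  have hs0 : (0:ℝ) < s := Real.sqrt_pos.2 hv
  -- pointwise scaling of the finite difference
  have hpt : ∀ z : ℝ, finDiff h m (gaussDensity v) z
      = s⁻¹ * finDiff (h / s) m (gaussDensity 1) (z / s) := by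
    intro z
    unfold finDiff
    rw [Finset.mul_sum]
    apply Finset.sum_congr rfl
    intro j _
    rw [gauss_scaling hv]
    have harg : (z + (j : ℝ) * h) / s = z / s + (j : ℝ) * (h / s) := by ring
    rw [harg]
    ring
  have step1 : (∫ z : ℝ, |finDiff h m (gaussDensity v) z|)
      = ∫ u : ℝ, |finDiff (h / s) m (gaussDensity 1) u| := by
    have e1 : (fun z : ℝ => |finDiff h m (gaussDensity v) z|)
        = fun z : ℝ => s⁻¹ * |finDiff (h / s) m (gaussDensity 1) (z / s)| := by
      funext z
      rw [hpt z, abs_mul, abs_of_nonneg (inv_nonneg.2 hs0.le)]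
    rw [e1, integral_const_mul,
      Measure.integral_comp_div (fun u => |finDiff (h / s) m (gaussDensity 1) u|) s]
    rw [smul_eq_mul, abs_of_nonneg hs0.le]
    field_simp
  have step2 : (∫ u : ℝ, |finDiff (h / s) m (gaussDensity 1) u|)
      ≤ |h / s| ^ m * A := by
    rw [gauss_eq_fP, hA, hP₀]
    exact key (h / s) m _
  have habs : |h / s| = |h| / s := by
    rw [abs_div, abs_of_nonneg hs0.le]
  calc (∫ z : ℝ, |finDiff h m (gaussDensity v) z|)
      = ∫ u : ℝ, |finDiff (h / s) m (gaussDensity 1) u| := step1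
    _ ≤ |h / s| ^ m * A := step2
    _ = A * (|h| / s) ^ m := by rw [habs]; ring
    _ ≤ (A + 1) * (|h| / Real.sqrt v) ^ m := by
        rw [← hs]
        have hpw : (0:ℝ) ≤ (|h| / s) ^ m := by positivity
        nlinarith
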